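/- Let (X, μ) be a finite measure space, q = 2 + 2/n with n ≥ 1, f : X → ℝ bounded measurable with ∫_X f dμ < 0, and u : X → ℝ nonnegative with u ∈ L^q(μ). Write ū ∈ ℝ for a constant (the mean value) and suppose ∫_X f u^q dμ = 1. Then there exists a constant C depending only on n, sup|f|, |∫ f dμ|, and μ(X) such that ū^q ≤ (1/2) ū^q + C ‖u − ū‖_{L^q}^q, and hence ū ≤ C' ‖u − ū‖_{L^q} + C'' for explicit constants; in particular ū is bounded in terms of ‖u − ū‖_{L^q}. -/

import Mathlib

/-!
Since `∫ f u^q = 1` and `∫ f = -I`, integrating `f (u^q - ū^q)` gives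
`I ū^q < ∫ f (u^q - ū^q) ≤ sup|f| ∫ |u^q - ū^q|`. Pointwise,
`|a^q - b^q| ≤ c (|a - b|^q + b^(q-1) |a - b|)` by convexity of `x ↦ x^q`, and Young's inequality
turns the mixed term into `ε b^q + K_ε |a - b|^q`. Choosing `ε` so that the `ū^q` term costs at
most `I ū^q / 2` absorbs it into the left-hand side.
-/

open MeasureTheory Real

lemma rpow_sub_rpow_le_mul_rpow_sub_one_mul {q a b : ℝ} (hq : 1 ≤ q) (hb : 0 ≤ b) (hba : b ≤ a) :
    a ^ q - b ^ q ≤ q * a ^ (q - 1) * (a - b) := by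
  obtain rfl | ha := (hb.trans hba).eq_or_lt
  · simp [le_antisymm hba hb]
  have hbern := one_add_mul_self_le_rpow_one_add (s := b / a - 1)
    (by linarith [div_nonneg hb ha.le]) hq
  rw [add_sub_cancel, div_rpow hb ha.le, le_div_iff₀ (by positivity)] at hbern
  have : q * a ^ (q - 1) * (a - b) = -(q * (b / a - 1)) * a ^ q := by
    rw [rpow_sub_one ha.ne']; field_simp; ring
  linarith

lemma abs_rpow_sub_rpow_le_mul_max {q a b : ℝ} (hq : 1 ≤ q) (ha : 0 ≤ a) (hb : 0 ≤ b) :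
    |a ^ q - b ^ q| ≤ q * max a b ^ (q - 1) * |a - b| := by
  rcases le_total a b with hab | hab
  · rw [abs_sub_comm, abs_sub_comm a, max_eq_right hab, abs_of_nonneg (sub_nonneg.2 hab),
      abs_of_nonneg (sub_nonneg.2 (rpow_le_rpow ha hab (by linarith)))]
    exact rpow_sub_rpow_le_mul_rpow_sub_one_mul hq ha hab
  · rw [max_eq_left hab, abs_of_nonneg (sub_nonneg.2 hab),
      abs_of_nonneg (sub_nonneg.2 (rpow_le_rpow hb hab (by linarith)))]
    exact rpow_sub_rpow_le_mul_rpow_sub_one_mul hq hb hab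

lemma abs_rpow_sub_rpow_le {q a b : ℝ} (hq : 1 ≤ q) (ha : 0 ≤ a) (hb : 0 ≤ b) :
    |a ^ q - b ^ q| ≤ q * 2 ^ (q - 1) * (|a - b| ^ q + b ^ (q - 1) * |a - b|) := by
  set t := |a - b|
  have ht : 0 ≤ t := abs_nonneg _
  have hq1 : 0 ≤ q - 1 := by linarith
  have hmax : max a b ≤ 2 * max b t := by
    have : a ≤ b + t := by linarith [le_abs_self (a - b)]
    have := le_max_left b t
    have := le_max_right b t
    exact max_le (by linarith) (by linarith)
  have hsplit : max b t ^ (q - 1) * t ≤ t ^ q + b ^ (q - 1) * t := by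
    have htq : t ^ (q - 1) * t = t ^ q := by rw [← rpow_add_one' ht (by linarith), sub_add_cancel]
    rcases le_total b t with h | h
    · rw [max_eq_right h, htq]; linarith [mul_nonneg (rpow_nonneg hb (q - 1)) ht]
    · rw [max_eq_left h]; linarith [rpow_nonneg ht q]
  calc |a ^ q - b ^ q| ≤ q * max a b ^ (q - 1) * t := abs_rpow_sub_rpow_le_mul_max hq ha hb
    _ ≤ q * (2 * max b t) ^ (q - 1) * t := by gcongr
    _ = q * 2 ^ (q - 1) * (max b t ^ (q - 1) * t) := by
      rw [mul_rpow zero_le_two (le_max_of_le_left hb)]; ring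
    _ ≤ q * 2 ^ (q - 1) * (t ^ q + b ^ (q - 1) * t) := by gcongr

lemma rpow_sub_one_mul_le {q b t ε : ℝ} (hq : 1 ≤ q) (hb : 0 ≤ b) (ht : 0 ≤ t) (hε : 0 < ε) :
    b ^ (q - 1) * t ≤ ε * b ^ q + ε ^ (1 - q) * t ^ q := by
  have hq1 : q - 1 + 1 ≠ 0 := by linarith
  rcases le_total t (ε * b) with h | h
  · have : b ^ (q - 1) * t ≤ ε * b ^ q := by
      calc b ^ (q - 1) * t ≤ b ^ (q - 1) * (ε * b) := by gcongr
        _ = ε * b ^ q := by rw [mul_left_comm, ← rpow_add_one' hb hq1, sub_add_cancel]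
    linarith [mul_nonneg (rpow_nonneg hε.le (1 - q)) (rpow_nonneg ht q)]
  · have hbt : b ≤ t / ε := (le_div_iff₀ hε).2 (by linarith)
    have : b ^ (q - 1) * t ≤ ε ^ (1 - q) * t ^ q := by
      calc b ^ (q - 1) * t ≤ (t / ε) ^ (q - 1) * t := by gcongr
        _ = ε ^ (1 - q) * t ^ q := by
          rw [div_rpow ht hε.le, div_eq_mul_inv, ← rpow_neg hε.le, neg_sub, mul_right_comm,
            ← rpow_add_one' ht hq1, sub_add_cancel, mul_comm]
    linarith [mul_nonneg hε.le (rpow_nonneg hb q)]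

lemma exists_abs_rpow_sub_rpow_le {q ε : ℝ} (hq : 1 ≤ q) (hε : 0 < ε) :
    ∃ K, 0 < K ∧ ∀ a b, 0 ≤ a → 0 ≤ b → |a ^ q - b ^ q| ≤ ε * b ^ q + K * |a - b| ^ q := by
  set c := q * 2 ^ (q - 1)
  have hc : 0 < c := by positivity
  refine ⟨c * (1 + (ε / c) ^ (1 - q)), by positivity, fun a b ha hb => ?_⟩
  have hyoung := rpow_sub_one_mul_le hq hb (abs_nonneg (a - b)) (div_pos hε hc)
  calc |a ^ q - b ^ q| ≤ c * (|a - b| ^ q + b ^ (q - 1) * |a - b|) := abs_rpow_sub_rpow_le hq ha hb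
    _ ≤ c * (|a - b| ^ q + (ε / c * b ^ q + (ε / c) ^ (1 - q) * |a - b| ^ q)) := by gcongr
    _ = ε * b ^ q + c * (1 + (ε / c) ^ (1 - q)) * |a - b| ^ q := by field_simp; ring

section Integral

variable {X : Type*} [MeasurableSpace X] {μ : Measure X}

lemma memLp_of_integrable_rpow {u : X → ℝ} {q : ℝ} (hq : 0 < q) (hu : ∀ x, 0 ≤ u x)
    (hui : Integrable (fun x => u x ^ q) μ) : MemLp u (ENNReal.ofReal q) μ := by
  have hmeas : AEStronglyMeasurable u μ := by
    have : (fun x => (u x ^ q) ^ q⁻¹) = u := funext fun x => rpow_rpow_inv (hu x) hq.ne'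
    rw [← this]
    exact (continuous_rpow_const (inv_nonneg.2 hq.le)).comp_aestronglyMeasurable hui.1
  rw [← integrable_norm_rpow_iff hmeas (by simpa using hq) ENNReal.ofReal_ne_top]
  simpa [ENNReal.toReal_ofReal hq.le, abs_of_nonneg (hu _)] using hui

lemma integrable_abs_sub_const_rpow [IsFiniteMeasure μ] {u : X → ℝ} {q : ℝ} (hq : 0 < q)
    (hu : ∀ x, 0 ≤ u x) (hui : Integrable (fun x => u x ^ q) μ) (c : ℝ) :
    Integrable (fun x => |u x - c| ^ q) μ := by
  simpa [ENNReal.toReal_ofReal hq.le] using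
    ((memLp_of_integrable_rpow hq hu hui).sub (memLp_const c)).integrable_norm_rpow'

lemma neg_integral_mul_le_integral_abs_mul_sub {f g : X → ℝ} (hf : Integrable f μ)
    (hfg : Integrable (fun x => f x * g x) μ) (h : 0 ≤ ∫ x, f x * g x ∂μ) (c : ℝ) :
    -(∫ x, f x ∂μ) * c ≤ ∫ x, |f x * (g x - c)| ∂μ := by
  have hsplit : ∫ x, f x * (g x - c) ∂μ = (∫ x, f x * g x ∂μ) - (∫ x, f x ∂μ) * c := by
    simp_rw [mul_sub]
    rw [integral_sub hfg (hf.mul_const c), integral_mul_const]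
  calc -(∫ x, f x ∂μ) * c ≤ ∫ x, f x * (g x - c) ∂μ := by linarith
    _ ≤ ∫ x, |f x * (g x - c)| ∂μ := (le_abs_self _).trans abs_integral_le_integral_abs

lemma integral_abs_mul_rpow_sub_rpow_le [IsFiniteMeasure μ] {f u : X → ℝ} {q b M ε K : ℝ}
    (hM : 0 ≤ M) (hf : ∀ x, |f x| ≤ M) (hu : ∀ x, 0 ≤ u x)
    (hpoint : ∀ a, 0 ≤ a → |a ^ q - b ^ q| ≤ ε * b ^ q + K * |a - b| ^ q)
    (hG : Integrable (fun x => |u x - b| ^ q) μ) :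
    ∫ x, |f x * (u x ^ q - b ^ q)| ∂μ
      ≤ M * ε * μ.real Set.univ * b ^ q + M * K * ∫ x, |u x - b| ^ q ∂μ := by
  calc ∫ x, |f x * (u x ^ q - b ^ q)| ∂μ
      ≤ ∫ x, M * (ε * b ^ q + K * |u x - b| ^ q) ∂μ := by
        refine integral_mono_of_nonneg (ae_of_all _ fun x => abs_nonneg _)
          (((integrable_const _).add (hG.const_mul K)).const_mul M) (ae_of_all _ fun x => ?_)
        dsimp only
        rw [abs_mul]
        exact mul_le_mul (hf x) (hpoint _ (hu x)) (abs_nonneg _) hM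
    _ = M * ε * μ.real Set.univ * b ^ q + M * K * ∫ x, |u x - b| ^ q ∂μ := by
        rw [integral_const_mul, integral_add (integrable_const _) (hG.const_mul K),
          integral_const, integral_const_mul, smul_eq_mul]
        ring

end Integral

theorem stmt_17_general (n : ℕ) (Mf I V : ℝ)
    (hMf : 0 ≤ Mf) (hI : 0 < I) (hV : 0 < V) :
    ∃ C : ℝ, 0 < C ∧
      ∀ (X : Type) (mX : MeasurableSpace X) (μ : Measure X)
        (f u : X → ℝ) (ubar : ℝ),
        μ Set.univ = ENNReal.ofReal V →
        Measurable f → (∀ x, |f x| ≤ Mf) →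
        Integrable f μ → (∫ x, f x ∂μ) = -I →
        (∀ x, 0 ≤ u x) → 0 ≤ ubar →
        Integrable (fun x => u x ^ ((2 : ℝ) + 2 / n)) μ →
        Integrable (fun x => f x * u x ^ ((2 : ℝ) + 2 / n)) μ →
        (∫ x, f x * u x ^ ((2 : ℝ) + 2 / n) ∂μ) = 1 →
        ubar ^ ((2 : ℝ) + 2 / n) ≤ (1 / 2) * ubar ^ ((2 : ℝ) + 2 / n)
          + C * ∫ x, |u x - ubar| ^ ((2 : ℝ) + 2 / n) ∂μ := by
  set q : ℝ := 2 + 2 / n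
  have hq : 1 ≤ q := by
    have : (0 : ℝ) ≤ 2 / n := by positivity
    linarith
  -- `Mf + 1` rather than `Mf` keeps `ε` and `C` positive when `Mf = 0`.
  set M := Mf + 1
  have hM : 0 < M := by positivity
  obtain ⟨K, hK, hpoint⟩ := exists_abs_rpow_sub_rpow_le hq (ε := I / (2 * M * V)) (by positivity)
  refine ⟨M * K / I, by positivity, ?_⟩
  intro X _ μ f u ubar hμ _ hf hfi hfI hu hub hui hfui hfu
  have : IsFiniteMeasure μ := ⟨by simp [hμ]⟩
  have hlower : I * ubar ^ q ≤ ∫ x, |f x * (u x ^ q - ubar ^ q)| ∂μ := by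
    simpa [hfI] using neg_integral_mul_le_integral_abs_mul_sub hfi hfui (by simp [hfu]) (ubar ^ q)
  have hupper := integral_abs_mul_rpow_sub_rpow_le hM.le (fun x => (hf x).trans (by linarith)) hu
    (fun a ha => hpoint a ubar ha hub) (integrable_abs_sub_const_rpow (by linarith) hu hui ubar)
  have hhalf : M * (I / (2 * M * V)) * μ.real Set.univ = I / 2 := by
    rw [measureReal_def, hμ, ENNReal.toReal_ofReal hV.le]
    field_simp
  rw [hhalf] at hupper
  refine le_of_mul_le_mul_left ?_ hI
  calc I * ubar ^ q ≤ I / 2 * ubar ^ q + M * K * ∫ x, |u x - ubar| ^ q ∂μ := hlower.trans hupper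
    _ = I * (1 / 2 * ubar ^ q + M * K / I * ∫ x, |u x - ubar| ^ q ∂μ) := by field_simp

/-- Bound on the mean value `ubar` of the conformal factor in the null Yamabe case:
the constant `C` depends only on `n`, the bound `Mf` on `|f|`, the value
`I = |∫ f dμ|` (with `∫ f dμ = -I < 0`) and the total mass `V` of `μ`. -/
theorem stmt_17 (n : ℕ) (hn : 1 ≤ n) (Mf I V : ℝ)
    (hMf : 0 ≤ Mf) (hI : 0 < I) (hV : 0 < V) :
    ∃ C : ℝ, 0 < C ∧
      ∀ (X : Type) (mX : MeasurableSpace X) (μ : Measure X)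
        (f u : X → ℝ) (ubar : ℝ),
        μ Set.univ = ENNReal.ofReal V →
        Measurable f → (∀ x, |f x| ≤ Mf) →
        Integrable f μ → (∫ x, f x ∂μ) = -I →
        (∀ x, 0 ≤ u x) → 0 ≤ ubar →
        Integrable (fun x => u x ^ ((2 : ℝ) + 2 / n)) μ →
        Integrable (fun x => f x * u x ^ ((2 : ℝ) + 2 / n)) μ →
        (∫ x, f x * u x ^ ((2 : ℝ) + 2 / n) ∂μ) = 1 →
        ubar ^ ((2 : ℝ) + 2 / n) ≤ (1 / 2) * ubar ^ ((2 : ℝ) + 2 / n)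
          + C * ∫ x, |u x - ubar| ^ ((2 : ℝ) + 2 / n) ∂μ :=
  stmt_17_general n Mf I V hMf hI hV
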